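/- Let G and H be finite groups and F: Fin_G → Fin_H a functor. Then F preserves pullbacks, epimorphisms, and finite coproducts if and only if F is naturally isomorphic to −×_G X for some X in ^G Fin_H, where (−×_G X)(S) = (S × X)/~ with ~ generated by (sg, x) ~ (s, gx) and right H-action induced from X. Moreover, X ↦ −×_G X induces an equivalence of categories ^G Fin_H ≃ Fun_pce(Fin_G, Fin_H). -/

import Mathlib

open CategoryTheory CategoryTheory.Limits MulOpposite

namespace Paper

/-- A functor preserves pullbacks, finite coproducts, and epimorphisms. -/
def PreservesPCE {C : Type*} {D : Type*} [Category C] [Category D] (F : C ⥤ D) : Prop :=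
  Nonempty (PreservesLimitsOfShape WalkingCospan F) ∧
  (∀ (J : Type) [Finite J], Nonempty (PreservesColimitsOfShape (Discrete J) F)) ∧
  F.PreservesEpimorphisms

/-- `Fun_pce C D`: the full subcategory of the functor category spanned by the functors
preserving pullbacks, finite coproducts and epimorphisms. -/
abbrev FunPCE (C : Type*) (D : Type*) [Category C] [Category D] :=
  ObjectProperty.FullSubcategory (fun F : C ⥤ D => PreservesPCE F)

/-- Finite sets with an action of the monoid `M`. -/
abbrev ActCat (M : Type) [Monoid M] := Action FintypeCat.{0} (MonCat.of M)

/-- `Fin_G`: finite right `G`-sets (encoded as left `Gᵐᵒᵖ`-actions). -/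
abbrev FinRight (G : Type) [Group G] := ActCat Gᵐᵒᵖ

/-- `^G Fin`: the category of finite *free* left `G`-sets. -/
abbrev FinFreeL (G : Type) [Group G] :=
  ObjectProperty.FullSubcategory (fun X : ActCat G => ∀ (g : G) (x : X.V), ConcreteCategory.hom (X.ρ g) x = x → g = 1)

/-- Finite `(G,H)`-bisets: a left `G`-action and a commuting right `H`-action. -/
abbrev BiAct (G H : Type) [Group G] [Group H] := ActCat (G × Hᵐᵒᵖ)

/-- The left `G`-action of a `(G,H)`-biset is free. -/
def LeftFree {G H : Type} [Group G] [Group H] (X : BiAct G H) : Prop :=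
  ∀ (g : G) (x : X.V), ConcreteCategory.hom (X.ρ (g, 1)) x = x → g = 1

/-- `^G Fin_H`: finite `(G,H)`-bisets whose left `G`-action is free. -/
abbrev BiFin (G H : Type) [Group G] [Group H] :=
  ObjectProperty.FullSubcategory (fun X : BiAct G H => LeftFree X)

/-- The separable `(G,H)`-biset `G × T` attached to a finite right `H`-set `T`,
with actions `g • (g', t) • h = (g * g', t • h)`. -/
noncomputable def sepBiset (G H : Type) [Group G] [Group H] [Fintype G]
    (T : ActCat Hᵐᵒᵖ) : BiAct G H where
  V := FintypeCat.of (G × T.V)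
  ρ :=
    { toFun := fun (m : G × Hᵐᵒᵖ) => FintypeCat.homMk fun (p : G × T.V) => (m.1 * p.1, ConcreteCategory.hom (T.ρ m.2) p.2)
      map_one' := by
        apply FintypeCat.hom_ext; intro p
        show ((1 : G) * p.1, ConcreteCategory.hom (T.ρ 1) p.2) = p
        simp
      map_mul' := by
        intro a b
        apply FintypeCat.hom_ext; intro p
        show ((a.1 * b.1) * p.1, ConcreteCategory.hom (T.ρ (a.2 * b.2)) p.2)
          = (a.1 * (b.1 * p.1), ConcreteCategory.hom (T.ρ a.2) (ConcreteCategory.hom (T.ρ b.2) p.2))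
        rw [mul_assoc, map_mul]
        rfl }

/-- A `(G,H)`-biset is separable if it is isomorphic to `G × T`
for some finite right `H`-set `T`. -/
def Separable (G H : Type) [Group G] [Group H] [Fintype G] (X : BiAct G H) : Prop :=
  ∃ T : ActCat Hᵐᵒᵖ, Nonempty (X ≅ sepBiset G H T)

/-- `(^G Fin_H)^sep`: the full subcategory of separable bisets. -/
abbrev SepCat (G H : Type) [Group G] [Group H] [Fintype G] :=
  ObjectProperty.FullSubcategory (fun X : BiFin G H => Separable G H X.obj)

variable {G H : Type} [Group G] [Group H]

/-- The relation generating `X ×_{(H,G)} Y`: `(x·g, y) ~ (x, g·y)` and `(h·x, y) ~ (x, y·h)`. -/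
def pairRel (X : BiAct H G) (Y : BiAct G H) : X.V × Y.V → X.V × Y.V → Prop :=
  fun p q =>
    (∃ g : G, p.1 = ConcreteCategory.hom (X.ρ (1, op g)) q.1 ∧ q.2 = ConcreteCategory.hom (Y.ρ (g, 1)) p.2) ∨
    (∃ h : H, q.1 = ConcreteCategory.hom (X.ρ (h, 1)) p.1 ∧ p.2 = ConcreteCategory.hom (Y.ρ (1, op h)) q.2)

/-- `X ×_{(H,G)} Y`: the quotient of `X × Y` by the equivalence relation generated by
`(x·g, y) ~ (x, g·y)` and `(h·x, y) ~ (x, y·h)`. -/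
def PairSet (X : BiAct H G) (Y : BiAct G H) : Type := Quot (pairRel X Y)

instance (X : BiAct H G) (Y : BiAct G H) : Finite (PairSet X Y) :=
  Quot.finite _

/-- `X ×_{(H,G)} Y` as an object of the category of finite sets. -/
noncomputable def pairObj (X : BiAct H G) (Y : BiAct G H) : FintypeCat :=
  letI := Fintype.ofFinite (PairSet X Y)
  FintypeCat.of (PairSet X Y)

/-- Functoriality of `X ×_{(H,G)} Y` in `X`. -/
noncomputable def pairMapFst {X X' : BiAct H G} (f : X ⟶ X') (Y : BiAct G H) :
    pairObj X Y ⟶ pairObj X' Y :=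
  FintypeCat.homMk <| Quot.map (fun p => (f.hom p.1, p.2)) (by
    rintro ⟨x, y⟩ ⟨x', y'⟩ (⟨g, h1, h2⟩ | ⟨h, h1, h2⟩)
    · left
      refine ⟨g, ?_, h2⟩
      have := ConcreteCategory.congr_hom (f.comm (1, op g)) x'
      simp only [FintypeCat.comp_apply] at this
      dsimp only at h1 ⊢
      rw [h1]; exact this
    · right
      refine ⟨h, ?_, h2⟩
      have := ConcreteCategory.congr_hom (f.comm (h, 1)) x
      simp only [FintypeCat.comp_apply] at this
      dsimp only at h1 ⊢
      rw [h1]; exact this)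

/-- Functoriality of `X ×_{(H,G)} Y` in `Y`. -/
noncomputable def pairMapSnd (X : BiAct H G) {Y Y' : BiAct G H} (f : Y ⟶ Y') :
    pairObj X Y ⟶ pairObj X Y' :=
  FintypeCat.homMk <| Quot.map (fun p => (p.1, f.hom p.2)) (by
    rintro ⟨x, y⟩ ⟨x', y'⟩ (⟨g, h1, h2⟩ | ⟨h, h1, h2⟩)
    · left
      refine ⟨g, h1, ?_⟩
      have := ConcreteCategory.congr_hom (f.comm (g, 1)) y
      simp only [FintypeCat.comp_apply] at this
      dsimp only at h2 ⊢
      rw [h2]; exact this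
    · right
      refine ⟨h, h1, ?_⟩
      have := ConcreteCategory.congr_hom (f.comm (1, op h)) y'
      simp only [FintypeCat.comp_apply] at this
      dsimp only at h2 ⊢
      rw [h2]; exact this)

/-- For a fixed biset `X`, the functor `X ×_{(H,G)} -` on all of `^G Fin_H`. -/
noncomputable def pairFstFunctorRaw (X : BiAct H G) : BiAct G H ⥤ FintypeCat where
  obj Y := pairObj X Y
  map f := pairMapSnd X f
  map_id Y := by
    apply FintypeCat.hom_ext; intro q
    induction q using Quot.ind
    rfl
  map_comp f g := by
    apply FintypeCat.hom_ext; intro q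
    induction q using Quot.ind
    rfl

/-- For a fixed biset `X` in `^H Fin_G`, the functor `X ×_{(H,G)} -` on `(^G Fin_H)^sep`. -/
noncomputable def pairFstFunctor (G H : Type) [Group G] [Group H] [Fintype G]
    (X : BiAct H G) : SepCat G H ⥤ FintypeCat :=
  ObjectProperty.ι _ ⋙ ObjectProperty.ι _ ⋙ pairFstFunctorRaw X

/-- For a fixed biset `Y` in `^G Fin_H`, the functor `- ×_{(H,G)} Y` on `^H Fin_G`. -/
noncomputable def pairSndFunctor (G H : Type) [Group G] [Group H]
    (Y : BiAct G H) : BiFin H G ⥤ FintypeCat where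
  obj X := pairObj X.obj Y
  map f := pairMapFst f.hom Y
  map_id X := by
    apply FintypeCat.hom_ext; intro q
    induction q using Quot.ind
    rfl
  map_comp f g := by
    apply FintypeCat.hom_ext; intro q
    induction q using Quot.ind
    rfl

variable (G H) [Fintype G] [Fintype H]

/-- The functor `(^G Fin_H)^sep ⟶ Fun_pce(^H Fin_G, Fin)` induced by the pairing. -/
noncomputable def pairingPhi
    (h : ∀ Y : SepCat G H, PreservesPCE (pairSndFunctor G H Y.obj.obj)) :
    SepCat G H ⥤ FunPCE (BiFin H G) FintypeCat where
  obj Y := ⟨pairSndFunctor G H Y.obj.obj, h Y⟩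
  map {Y Y'} f :=
    { hom :=
      { app := fun X => pairMapSnd X.obj f.hom.hom
        naturality := by
          intro X X' g
          apply FintypeCat.hom_ext; intro q
          induction q using Quot.ind
          rfl } }
  map_id Y := by
    apply ObjectProperty.hom_ext
    apply NatTrans.ext
    funext X
    apply FintypeCat.hom_ext; intro q
    induction q using Quot.ind
    rfl
  map_comp f g := by
    apply ObjectProperty.hom_ext
    apply NatTrans.ext
    funext X
    apply FintypeCat.hom_ext; intro q
    induction q using Quot.ind
    rfl

/-- The functor `^H Fin_G ⟶ Fun_pce((^G Fin_H)^sep, Fin)` induced by the pairing. -/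
noncomputable def pairingPsi
    (h : ∀ X : BiFin H G, PreservesPCE (pairFstFunctor G H X.obj)) :
    BiFin H G ⥤ FunPCE (SepCat G H) FintypeCat where
  obj X := ⟨pairFstFunctor G H X.obj, h X⟩
  map {X X'} f :=
    { hom :=
      { app := fun Y => pairMapFst f.hom Y.obj.obj
        naturality := by
          intro Y Y' g
          apply FintypeCat.hom_ext; intro q
          induction q using Quot.ind
          rfl } }
  map_id X := by
    apply ObjectProperty.hom_ext
    apply NatTrans.ext
    funext Y
    apply FintypeCat.hom_ext; intro q
    induction q using Quot.ind
    rfl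
  map_comp f g := by
    apply ObjectProperty.hom_ext
    apply NatTrans.ext
    funext Y
    apply FintypeCat.hom_ext; intro q
    induction q using Quot.ind
    rfl

end Paper

namespace Paper

lemma actMul {M : Type} [Monoid M] (X : ActCat M) (a b : M) (v : X.V) :
    ConcreteCategory.hom (X.ρ (a * b)) v = ConcreteCategory.hom (X.ρ a) (ConcreteCategory.hom (X.ρ b) v) := by
  rw [map_mul]; rfl

variable {G H : Type} [Group G] [Group H]

/-- The relation generating `S ×_G X` for a right `G`-set `S` and a `(G,H)`-biset `X`:
`(s·g, x) ~ (s, g·x)`. -/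
def tensRel (S : FinRight G) (X : BiAct G H) : S.V × X.V → S.V × X.V → Prop :=
  fun p q => ∃ g : G, p.1 = ConcreteCategory.hom (S.ρ (op g)) q.1 ∧ q.2 = ConcreteCategory.hom (X.ρ (g, 1)) p.2

/-- `S ×_G X = (S × X)/~` with `~` generated by `(s·g, x) ~ (s, g·x)`. -/
def TensSet (S : FinRight G) (X : BiAct G H) : Type := Quot (tensRel S X)

instance (S : FinRight G) (X : BiAct G H) : Finite (TensSet S X) := Quot.finite _

/-- `S ×_G X` as a finite right `H`-set, with the right `H`-action induced from `X`. -/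
noncomputable def tensObj (S : FinRight G) (X : BiAct G H) : FinRight H where
  V := letI := Fintype.ofFinite (TensSet S X); FintypeCat.of (TensSet S X)
  ρ :=
    { toFun := fun oh => FintypeCat.homMk <| Quot.map (fun p => (p.1, ConcreteCategory.hom (X.ρ (1, oh)) p.2)) (by
        rintro ⟨s, x⟩ ⟨s', x'⟩ ⟨g, h1, h2⟩
        refine ⟨g, h1, ?_⟩
        dsimp only at h2 ⊢
        rw [h2, ← actMul, ← actMul]
        congr 1
        simp [Prod.ext_iff])
      map_one' := by
        apply FintypeCat.hom_ext; intro q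
        induction q using Quot.ind
        show Quot.mk _ (_, ConcreteCategory.hom (X.ρ 1) _) = Quot.mk _ _
        rw [Action.ρ_one]
        rfl
      map_mul' := by
        intro a b
        apply FintypeCat.hom_ext; intro q
        induction q using Quot.ind
        show Quot.mk _ (_, ConcreteCategory.hom (X.ρ (1, a * b)) _) = Quot.mk _ (_, ConcreteCategory.hom (X.ρ (1, a)) (ConcreteCategory.hom (X.ρ (1, b)) _))
        rw [show ((1 : G), a * b) = ((1 : G), a) * ((1 : G), b) by simp, actMul] }

/-- `- ×_G X : Fin_G → Fin_H` for a `(G,H)`-biset `X`. -/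
noncomputable def tensFunctor (G H : Type) [Group G] [Group H] (X : BiAct G H) :
    FinRight G ⥤ FinRight H where
  obj S := tensObj S X
  map {S S'} f :=
    { hom := FintypeCat.homMk <| Quot.map (fun p => (f.hom p.1, p.2)) (by
        rintro ⟨s, x⟩ ⟨s', x'⟩ ⟨g, h1, h2⟩
        refine ⟨g, ?_, h2⟩
        have := ConcreteCategory.congr_hom (f.comm (op g)) s'
        simp only [FintypeCat.comp_apply] at this
        dsimp only at h1 ⊢
        rw [h1]; exact this)
      comm := by
        intro oh
        apply FintypeCat.hom_ext; intro q
        induction q using Quot.ind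
        rfl }
  map_id S := by
    apply Action.hom_ext
    apply FintypeCat.hom_ext; intro q; induction q using Quot.ind; rfl
  map_comp f g := by
    apply Action.hom_ext
    apply FintypeCat.hom_ext; intro q; induction q using Quot.ind; rfl

/-- The functor `^G Fin_H ⟶ Fun_pce(Fin_G, Fin_H)`, `X ↦ - ×_G X`. -/
noncomputable def tensEquivFunctor (G H : Type) [Group G] [Group H]
    (h : ∀ X : BiFin G H, PreservesPCE (tensFunctor G H X.obj)) :
    BiFin G H ⥤ FunPCE (FinRight G) (FinRight H) where
  obj X := ⟨tensFunctor G H X.obj, h X⟩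
  map {X X'} φ :=
    { hom :=
      { app := fun S =>
          { hom := FintypeCat.homMk <| Quot.map (fun p => (p.1, φ.hom.hom p.2)) (by
              rintro ⟨s, x⟩ ⟨s', x'⟩ ⟨g, h1, h2⟩
              refine ⟨g, h1, ?_⟩
              have := ConcreteCategory.congr_hom (φ.hom.comm (g, 1)) x
              simp only [FintypeCat.comp_apply] at this
              dsimp only at h2 ⊢
              rw [h2]; exact this)
            comm := by
              intro oh
              apply FintypeCat.hom_ext; intro q
              induction q using Quot.ind
              rename_i p
              have hc := ConcreteCategory.congr_hom (φ.hom.comm ((1 : G), oh)) p.2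
              simp only [FintypeCat.comp_apply] at hc
              show Quot.mk _ (p.1, φ.hom.hom (ConcreteCategory.hom (X.obj.ρ (1, oh)) p.2))
                = Quot.mk _ (p.1, ConcreteCategory.hom (X'.obj.ρ (1, oh)) (φ.hom.hom p.2))
              rw [hc] }
        naturality := by
          intro S S' f
          apply Action.hom_ext
          apply FintypeCat.hom_ext; intro q; induction q using Quot.ind; rfl } }
  map_id X := by
    apply ObjectProperty.hom_ext
    apply NatTrans.ext
    funext S
    apply Action.hom_ext
    apply FintypeCat.hom_ext; intro q; induction q using Quot.ind; rfl
  map_comp f g := by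
    apply ObjectProperty.hom_ext
    apply NatTrans.ext
    funext S
    apply Action.hom_ext
    apply FintypeCat.hom_ext; intro q; induction q using Quot.ind; rfl

/-!
If the left `G`-action on `X` is free, the element of `G` relating two representatives of a point
of `S ×_G X` is unique, and with this `- ×_G X` visibly preserves pullbacks; coproducts and
surjections are preserved for any `X`.

Conversely, for a functor `F` preserving pullbacks, finite coproducts and epimorphisms put
`X = F(Ĝ)`, where `Ĝ` is `G` acting on itself by right multiplication and `G` acts on `F(Ĝ)` on
the left through `F` applied to left translations. Every `S` is a quotient of `⊔_{s ∈ S} Ĝ` via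
the orbit maps `a ↦ s a`, so the comparison `S ×_G F(Ĝ) ⟶ F(S)`, `[s, ξ] ↦ F(s · -)(ξ)`, is
surjective; the pullback of two orbit maps is again covered by copies of `Ĝ`, which makes it
injective. Freeness of `F(Ĝ)` comes from `Ĝ × Ĝ = ⊔_{c ∈ G} {(c a, a)}`, a pullback over the
point and a coproduct at the same time. Finally `Ĝ ×_G X ≅ X`, so a natural transformation
`- ×_G X ⟶ - ×_G X'` is determined by, and recovered from, a biset map `X ⟶ X'`.
-/

instance instCoeFunEndFintypeCat (A : FintypeCat.{0}) : CoeFun (End A) (fun _ => A → A) :=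
  ⟨fun f => ConcreteCategory.hom f⟩

namespace ActCat

variable {M : Type} [Monoid M]

lemma ρ_one_apply (X : ActCat M) (v : X.V) : X.ρ 1 v = v := by
  rw [Action.ρ_one]; rfl

lemma hom_comm_apply {A B : ActCat M} (f : A ⟶ B) (m : M) (v : A.V) :
    f.hom (A.ρ m v) = B.ρ m (f.hom v) :=
  ConcreteCategory.congr_hom (f.comm m) v

lemma comp_hom_apply {A B C : ActCat M} (f : A ⟶ B) (g : B ⟶ C) (v : A.V) :
    (f ≫ g).hom v = g.hom (f.hom v) := rfl

lemma map_hom_map_hom_apply {N : Type} [Monoid N] (F : ActCat M ⥤ ActCat N) {A B C : ActCat M}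
    (f : A ⟶ B) (g : B ⟶ C) (v : (F.obj A).V) :
    (F.map g).hom ((F.map f).hom v) = (F.map (f ≫ g)).hom v := by
  rw [F.map_comp]; rfl

lemma congr_hom_apply {A B : ActCat M} {f g : A ⟶ B} (h : f = g) (v : A.V) :
    f.hom v = g.hom v := by rw [h]

lemma isIso_of_bijective {A B : ActCat M} (f : A ⟶ B) (hf : Function.Bijective f.hom) :
    IsIso f := by
  have : IsIso ((forget FintypeCat).map f.hom) := (isIso_iff_bijective _).mpr hf
  have : IsIso f.hom := isIso_of_reflects_iso f.hom (forget FintypeCat)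
  exact Action.isIso_of_hom_isIso f

/-- Written as a composite, rather than as `forget (ActCat M)`, so that instance search finds that
it preserves and reflects finite limits and colimits. -/
abbrev toTypes (M : Type) [Monoid M] : ActCat M ⥤ Type :=
  Action.forget FintypeCat (MonCat.of M) ⋙ forget FintypeCat

lemma epi_iff_surjective {A B : ActCat M} (f : A ⟶ B) : Epi f ↔ Function.Surjective f.hom := by
  have : PreservesColimitsOfShape WalkingSpan (forget (ActCat M)) :=
    inferInstanceAs (PreservesColimitsOfShape WalkingSpan (toTypes M))
  exact ConcreteCategory.epi_iff_surjective_of_preservesPushout f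

lemma isPullback_iff {P A B C : ActCat M} (fst : P ⟶ A) (snd : P ⟶ B) (f : A ⟶ C) (g : B ⟶ C) :
    IsPullback fst snd f g ↔ fst ≫ f = snd ≫ g ∧
      (∀ x y, fst.hom x = fst.hom y → snd.hom x = snd.hom y → x = y) ∧
      ∀ a b, f.hom a = g.hom b → ∃ x, fst.hom x = a ∧ snd.hom x = b := by
  refine ⟨fun h => ⟨h.w, ?_⟩, fun ⟨w, h⟩ => ?_⟩
  · obtain ⟨-, hinj, hex⟩ := (Types.isPullback_iff _ _ _ _).mp (h.map (toTypes M))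
    exact ⟨fun x y h₁ h₂ => hinj x y ⟨h₁, h₂⟩, hex⟩
  · refine IsPullback.of_map (toTypes M) w ((Types.isPullback_iff _ _ _ _).mpr ?_)
    exact ⟨by rw [← Functor.map_comp, w, Functor.map_comp],
      fun x y hxy => h.1 x y hxy.1 hxy.2, h.2⟩

lemma nonempty_isColimit_cofan_iff {J : Type} [Finite J] {A : J → ActCat M} (c : Cofan A) :
    Nonempty (IsColimit c) ↔
      Function.Bijective (fun p : Σ j, (A j).V => (c.inj p.1).hom p.2) := by
  have e := isColimitMapCoconeCofanMkEquiv (toTypes M) A c.inj (P := c.pt)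
  refine Iff.trans ?_ (Cofan.nonempty_isColimit_iff_bijective_fromSigma
    (Cofan.mk ((toTypes M).obj c.pt) fun j => (toTypes M).map (c.inj j)))
  exact ⟨fun ⟨h⟩ => ⟨e (isColimitOfPreserves (toTypes M) h)⟩,
    fun ⟨h⟩ => ⟨isColimitOfReflects (toTypes M) (e.symm h)⟩⟩

end ActCat

lemma PreservesPCE.of_iso {C D : Type*} [Category C] [Category D] {F F' : C ⥤ D} (e : F ≅ F')
    (hF : PreservesPCE F) : PreservesPCE F' := by
  obtain ⟨⟨_⟩, hcoprod, _⟩ := hF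
  refine ⟨⟨preservesLimitsOfShape_of_natIso e⟩, fun J _ => ?_,
    Functor.PreservesEpimorphisms.of_iso e⟩
  have := (hcoprod J).some
  exact ⟨preservesColimitsOfShape_of_natIso e⟩

namespace BiAct

variable {G H : Type} [Group G] [Group H]

lemma ρ_left_mul_apply (X : BiAct G H) (g g' : G) (v : X.V) :
    X.ρ (g, 1) (X.ρ (g', 1) v) = X.ρ (g * g', 1) v := by
  rw [← actMul, Prod.mk_mul_mk, one_mul]

lemma ρ_left_right_apply (X : BiAct G H) (g : G) (h : Hᵐᵒᵖ) (v : X.V) :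
    X.ρ (g, 1) (X.ρ (1, h) v) = X.ρ (g, h) v := by
  rw [← actMul, Prod.mk_mul_mk, mul_one, one_mul]

end BiAct

lemma LeftFree.eq_of_ρ_eq {G H : Type} [Group G] [Group H] {X : BiAct G H} (hX : LeftFree X)
    {g g' : G} {v : X.V} (h : X.ρ (g, 1) v = X.ρ (g', 1) v) : g = g' := by
  refine (inv_mul_eq_one.mp (hX (g'⁻¹ * g) v ?_)).symm
  rw [← BiAct.ρ_left_mul_apply, h, BiAct.ρ_left_mul_apply, inv_mul_cancel, ← Prod.one_eq_mk,
    ActCat.ρ_one_apply]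

namespace TensSet

variable {S : FinRight G} {X : BiAct G H}

def mk (s : S.V) (x : X.V) : ((tensFunctor G H X).obj S).V := Quot.mk (tensRel S X) (s, x)

@[elab_as_elim]
lemma ind {motive : ((tensFunctor G H X).obj S).V → Prop} (h : ∀ s x, motive (mk s x))
    (q : ((tensFunctor G H X).obj S).V) : motive q :=
  Quot.ind (fun p => h p.1 p.2) q

lemma tensRel_equivalence (S : FinRight G) (X : BiAct G H) : Equivalence (tensRel S X) where
  refl p := ⟨1, by rw [op_one, ActCat.ρ_one_apply], by rw [← Prod.one_eq_mk, ActCat.ρ_one_apply]⟩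
  symm := by
    rintro p q ⟨g, h₁, h₂⟩
    refine ⟨g⁻¹, ?_, ?_⟩
    · rw [h₁, ← actMul, ← op_mul, mul_inv_cancel, op_one, ActCat.ρ_one_apply]
    · rw [h₂, BiAct.ρ_left_mul_apply, inv_mul_cancel, ← Prod.one_eq_mk, ActCat.ρ_one_apply]
  trans := by
    rintro p q r ⟨g, h₁, h₂⟩ ⟨g', h₁', h₂'⟩
    exact ⟨g' * g, by rw [h₁, h₁', ← actMul, ← op_mul], by rw [h₂', h₂, BiAct.ρ_left_mul_apply]⟩

lemma mk_eq_mk_iff {s t : S.V} {x y : X.V} :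
    mk s x = mk t y ↔ ∃ g : G, s = S.ρ (op g) t ∧ y = X.ρ (g, 1) x :=
  Quot.eq.trans (tensRel_equivalence S X).eqvGen_iff

lemma mk_ρ (s : S.V) (g : G) (x : X.V) : mk (S.ρ (op g) s) x = mk s (X.ρ (g, 1) x) :=
  Quot.sound ⟨g, rfl, rfl⟩

end TensSet

open TensSet

lemma tensFunctor_map_mk {X : BiAct G H} {S S' : FinRight G} (f : S ⟶ S') (s : S.V) (x : X.V) :
    ((tensFunctor G H X).map f).hom (mk s x) = mk (f.hom s) x := rfl

lemma tensFunctor_obj_ρ_mk {S : FinRight G} {X : BiAct G H} (h : Hᵐᵒᵖ) (s : S.V) (x : X.V) :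
    ((tensFunctor G H X).obj S).ρ h (mk s x) = mk s (X.ρ (1, h) x) := rfl

section TensorPreservation

variable {X : BiAct G H}

lemma tensFunctor_map_isPullback (hX : LeftFree X) {P A B C : FinRight G} {fst : P ⟶ A}
    {snd : P ⟶ B} {f : A ⟶ C} {g : B ⟶ C} (h : IsPullback fst snd f g) :
    IsPullback ((tensFunctor G H X).map fst) ((tensFunctor G H X).map snd)
      ((tensFunctor G H X).map f) ((tensFunctor G H X).map g) := by
  obtain ⟨w, hinj, hex⟩ := (ActCat.isPullback_iff _ _ _ _).mp h
  refine (ActCat.isPullback_iff _ _ _ _).mpr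
    ⟨by rw [← Functor.map_comp, w, Functor.map_comp], ?_, ?_⟩
  · intro q q'
    induction q using TensSet.ind with | h p x => ?_
    induction q' using TensSet.ind with | h p' y => ?_
    intro h₁ h₂
    obtain ⟨g₁, hp₁, hy₁⟩ := mk_eq_mk_iff.mp h₁
    obtain ⟨g₂, hp₂, hy₂⟩ := mk_eq_mk_iff.mp h₂
    obtain rfl : g₁ = g₂ := hX.eq_of_ρ_eq (hy₁.symm.trans hy₂)
    refine mk_eq_mk_iff.mpr ⟨g₁, hinj _ _ ?_ ?_, hy₁⟩
    · rw [hp₁, ActCat.hom_comm_apply]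
    · rw [hp₂, ActCat.hom_comm_apply]
  · intro q q'
    induction q using TensSet.ind with | h a x => ?_
    induction q' using TensSet.ind with | h b y => ?_
    intro h
    obtain ⟨c, hc, rfl⟩ := mk_eq_mk_iff.mp h
    obtain ⟨p, rfl, hp⟩ := hex a (B.ρ (op c) b) (by rw [hc, ActCat.hom_comm_apply])
    exact ⟨mk p x, rfl, by rw [tensFunctor_map_mk, hp, mk_ρ]⟩

lemma nonempty_isColimit_tensFunctor_cofan {J : Type} [Finite J] {A : J → FinRight G}
    {c : Cofan A} (hc : IsColimit c) :
    Nonempty (IsColimit (Cofan.mk ((tensFunctor G H X).obj c.pt)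
      fun j => (tensFunctor G H X).map (c.inj j))) := by
  refine (ActCat.nonempty_isColimit_cofan_iff _).mpr ⟨?_, ?_⟩
  · rintro ⟨i, q⟩ ⟨j, q'⟩
    induction q using TensSet.ind with | h a x => ?_
    induction q' using TensSet.ind with | h b y => ?_
    intro h
    obtain ⟨g, hg, rfl⟩ := mk_eq_mk_iff.mp h
    have hσ := ((ActCat.nonempty_isColimit_cofan_iff c).mp ⟨hc⟩).1
      (a₁ := ⟨i, a⟩) (a₂ := ⟨j, (A j).ρ (op g) b⟩) (hg.trans (ActCat.hom_comm_apply _ _ _).symm)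
    obtain ⟨rfl, hab⟩ := Sigma.mk.inj_iff.mp hσ
    rw [eq_of_heq hab, mk_ρ]
  · intro q
    induction q using TensSet.ind with | h s x => ?_
    obtain ⟨⟨j, a⟩, rfl⟩ := ((ActCat.nonempty_isColimit_cofan_iff c).mp ⟨hc⟩).2 s
    exact ⟨⟨j, mk a x⟩, rfl⟩

lemma tensFunctor_map_surjective {A B : FinRight G} {f : A ⟶ B}
    (hf : Function.Surjective f.hom) : Function.Surjective ((tensFunctor G H X).map f).hom := by
  intro q
  induction q using TensSet.ind with | h b x => ?_
  obtain ⟨a, rfl⟩ := hf b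
  exact ⟨mk a x, rfl⟩

theorem preservesPCE_tensFunctor (hX : LeftFree X) : PreservesPCE (tensFunctor G H X) := by
  refine ⟨⟨preservesLimitsOfShape_walkingCospan_of_forall_isPullback fun _ _ _ f g _ =>
      ⟨_, _, _, IsPullback.of_hasPullback f g, tensFunctor_map_isPullback hX
        (IsPullback.of_hasPullback f g)⟩⟩,
    fun J _ => ⟨?_⟩, ⟨fun f hf => ?_⟩⟩
  · have (A : J → FinRight G) : PreservesColimit (Discrete.functor A) (tensFunctor G H X) :=
      preservesColimit_of_preserves_colimit_cocone (coproductIsCoproduct A)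
        ((isColimitMapCoconeCofanMkEquiv _ _ _).symm
          (nonempty_isColimit_tensFunctor_cofan (coproductIsCoproduct A)).some)
    exact preservesColimitsOfShape_of_discrete _
  · rw [ActCat.epi_iff_surjective] at hf ⊢
    exact tensFunctor_map_surjective hf

end TensorPreservation

section RightRegular

variable [Fintype G]

variable (G) in
abbrev rightRegular : FinRight G where
  V := FintypeCat.of G
  ρ := (Action.FintypeCat.ofMulAction Gᵐᵒᵖ (FintypeCat.of G)).ρ

def leftMul (g : G) : rightRegular G ⟶ rightRegular G where
  hom := FintypeCat.homMk fun a : G => g * a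
  comm m := by ext a; exact (mul_assoc g a m.unop).symm

lemma leftMul_apply (g a : G) : (leftMul g).hom a = g * a := rfl

lemma leftMul_one : leftMul (1 : G) = 𝟙 (rightRegular G) := by
  ext a; exact one_mul (M := G) a

lemma leftMul_comp (g g' : G) : leftMul g' ≫ leftMul g = leftMul (g * g') := by
  ext a; exact (mul_assoc g g' a).symm

def orbitMap (S : FinRight G) (s : S.V) : rightRegular G ⟶ S where
  hom := FintypeCat.homMk fun a : G => S.ρ (op a) s
  comm m := by ext a; exact actMul S m (op a) s

lemma leftMul_orbitMap (S : FinRight G) (s : S.V) (g : G) :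
    leftMul g ≫ orbitMap S s = orbitMap S (S.ρ (op g) s) := by
  ext a; exact actMul S (op a) (op g) s

lemma orbitMap_comp {S S' : FinRight G} (f : S ⟶ S') (s : S.V) :
    orbitMap S s ≫ f = orbitMap S' (f.hom s) := by
  ext a; exact ActCat.hom_comm_apply f _ s

lemma orbitMap_rightRegular (a : G) : orbitMap (rightRegular G) a = leftMul a := rfl

lemma orbitMap_apply_one (S : FinRight G) (s : S.V) : (orbitMap S s).hom (1 : G) = s := by
  show S.ρ (op 1) s = s
  rw [op_one, ActCat.ρ_one_apply]

end RightRegular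

section RegularProd

variable [Fintype G]

variable (G) in
abbrev regularProd : FinRight G where
  V := FintypeCat.of (G × G)
  ρ := (Action.FintypeCat.ofMulAction Gᵐᵒᵖ (FintypeCat.of (G × G))).ρ

namespace regularProd

def fst : regularProd G ⟶ rightRegular G where
  hom := FintypeCat.homMk Prod.fst
  comm _ := rfl

def snd : regularProd G ⟶ rightRegular G where
  hom := FintypeCat.homMk Prod.snd
  comm _ := rfl

def inj (c : G) : rightRegular G ⟶ regularProd G where
  hom := FintypeCat.homMk fun a : G => (c * a, a)
  comm m := FintypeCat.hom_ext _ _ fun a => congrArg (·, a * m.unop) (mul_assoc c a m.unop).symm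

lemma inj_fst (c : G) : inj c ≫ fst = leftMul c := rfl

lemma inj_snd (c : G) : inj c ≫ snd = 𝟙 _ := rfl

variable (G) in
def toPoint (S : FinRight G) : S ⟶ Action.trivial Gᵐᵒᵖ (FintypeCat.of PUnit) where
  hom := FintypeCat.homMk fun _ => PUnit.unit
  comm _ := rfl

lemma isPullback : IsPullback fst snd (toPoint G _) (toPoint G _) :=
  (ActCat.isPullback_iff _ _ _ _).mpr
    ⟨rfl, fun _ _ h₁ h₂ => Prod.ext h₁ h₂, fun a b _ => ⟨(a, b), rfl, rfl⟩⟩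

lemma nonempty_isColimit : Nonempty (IsColimit (Cofan.mk (regularProd G) inj)) := by
  refine (ActCat.nonempty_isColimit_cofan_iff _).mpr ⟨?_, ?_⟩
  · rintro ⟨c, a⟩ ⟨c', a'⟩ h
    obtain ⟨h₁, rfl : a = a'⟩ := Prod.ext_iff.mp h
    obtain rfl : c = c' := mul_right_cancel h₁
    rfl
  · rintro ⟨u, v⟩
    exact ⟨⟨u * v⁻¹, v⟩, Prod.ext (inv_mul_cancel_right u v) rfl⟩

end regularProd

end RegularProd

section Reconstruction

variable [Fintype G] (F : FinRight G ⥤ FinRight H)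

abbrev bisetOfFunctor : BiAct G H where
  V := (F.obj (rightRegular G)).V
  ρ :=
    { toFun := fun m => FintypeCat.homMk fun v =>
        (F.map (leftMul m.1)).hom ((F.obj (rightRegular G)).ρ m.2 v)
      map_one' := by
        refine FintypeCat.hom_ext _ _ fun v => ?_
        show (F.map (leftMul (1 : G))).hom ((F.obj (rightRegular G)).ρ 1 v) = v
        rw [ActCat.ρ_one_apply, leftMul_one, F.map_id]
        rfl
      map_mul' := by
        intro a b
        refine FintypeCat.hom_ext _ _ fun v => ?_
        show (F.map (leftMul (a.1 * b.1))).hom ((F.obj (rightRegular G)).ρ (a.2 * b.2) v)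
          = (F.map (leftMul a.1)).hom ((F.obj (rightRegular G)).ρ a.2
              ((F.map (leftMul b.1)).hom ((F.obj (rightRegular G)).ρ b.2 v)))
        rw [← leftMul_comp, F.map_comp, ActCat.comp_hom_apply, actMul,
          ActCat.hom_comm_apply (F.map (leftMul b.1))] }

lemma bisetOfFunctor_ρ_left (g : G) (v : (F.obj (rightRegular G)).V) :
    (bisetOfFunctor F).ρ (g, 1) v = (F.map (leftMul g)).hom v := by
  show (F.map (leftMul g)).hom ((F.obj (rightRegular G)).ρ 1 v) = _
  rw [ActCat.ρ_one_apply]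

lemma bisetOfFunctor_ρ_right (h : Hᵐᵒᵖ) (v : (F.obj (rightRegular G)).V) :
    (bisetOfFunctor F).ρ (1, h) v = (F.obj (rightRegular G)).ρ h v := by
  show (F.map (leftMul (1 : G))).hom _ = _
  rw [leftMul_one, F.map_id]
  rfl

variable {F}

/-- Since `F` preserves the decomposition `Ĝ × Ĝ = ⊔_c {(c * a, a)}` as a pullback and a
coproduct, a point of `F(Ĝ)` fixed by `F(c * -)` lies in two summands at once. -/
lemma leftFree_bisetOfFunctor (hF : PreservesPCE F) : LeftFree (bisetOfFunctor F) := by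
  obtain ⟨⟨_⟩, hcoprod, -⟩ := hF
  have := (hcoprod G).some
  intro g (x : (F.obj (rightRegular G)).V) hx
  replace hx : (F.map (leftMul g)).hom x = x := (bisetOfFunctor_ρ_left F g x).symm.trans hx
  have hpb := (ActCat.isPullback_iff _ _ _ _).mp (F.map_isPullback regularProd.isPullback)
  have hco := (ActCat.nonempty_isColimit_cofan_iff _).mp
    ⟨isColimitCofanMkObjOfIsColimit F _ _ regularProd.nonempty_isColimit.some⟩
  have hinj : (F.map (regularProd.inj g)).hom x = (F.map (regularProd.inj 1)).hom x := by
    refine hpb.2.1 _ _ ?_ ?_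
    · rw [ActCat.map_hom_map_hom_apply, ActCat.map_hom_map_hom_apply, regularProd.inj_fst,
        regularProd.inj_fst, leftMul_one, hx, F.map_id]
      rfl
    · rw [ActCat.map_hom_map_hom_apply, ActCat.map_hom_map_hom_apply, regularProd.inj_snd,
        regularProd.inj_snd]
  exact congrArg Sigma.fst (hco.1 (a₁ := ⟨g, x⟩) (a₂ := ⟨1, x⟩) hinj)

end Reconstruction

section Comparison

variable [Fintype G] {F : FinRight G ⥤ FinRight H}

/-- `F` preserves the coproduct `⊔_{s ∈ S} Ĝ` and the epimorphism from it onto `S`. -/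
lemma exists_map_orbitMap_apply_eq (hF : PreservesPCE F) (S : FinRight G) (v : (F.obj S).V) :
    ∃ (s : S.V) (ξ : (F.obj (rightRegular G)).V), (F.map (orbitMap S s)).hom ξ = v := by
  obtain ⟨-, hcoprod, hepi⟩ := hF
  have := (hcoprod S.V).some
  let π : ∐ (fun _ : S.V => rightRegular G) ⟶ S := Sigma.desc (orbitMap S)
  have hπ : Epi π := by
    refine (ActCat.epi_iff_surjective π).mpr fun s =>
      ⟨(Sigma.ι (fun _ : S.V => rightRegular G) s).hom (1 : G), ?_⟩
    exact (ActCat.congr_hom_apply (Sigma.ι_desc (orbitMap S) s) (1 : G)).trans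
      (orbitMap_apply_one S s)
  obtain ⟨u, rfl⟩ := (ActCat.epi_iff_surjective (F.map π)).mp inferInstance v
  obtain ⟨⟨s, ξ⟩, rfl⟩ := ((ActCat.nonempty_isColimit_cofan_iff _).mp
    ⟨isColimitCofanMkObjOfIsColimit F _ _ (coproductIsCoproduct _)⟩).2 u
  refine ⟨s, ξ, ?_⟩
  show _ = (F.map π).hom ((F.map (Sigma.ι (fun _ : S.V => rightRegular G) s)).hom ξ)
  rw [ActCat.map_hom_map_hom_apply, Sigma.ι_desc]

variable (F) in
noncomputable def tensComparison : tensFunctor G H (bisetOfFunctor F) ⟶ F where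
  app S :=
    { hom := FintypeCat.homMk <| Quot.lift (fun p => (F.map (orbitMap S p.1)).hom p.2) (by
        rintro ⟨s, x⟩ ⟨t, y⟩ ⟨g, hs : s = S.ρ (op g) t, hy : y = (bisetOfFunctor F).ρ (g, 1) x⟩
        show (F.map (orbitMap S s)).hom x = (F.map (orbitMap S t)).hom y
        rw [hs, hy, bisetOfFunctor_ρ_left, ActCat.map_hom_map_hom_apply, leftMul_orbitMap])
      comm m := by
        refine FintypeCat.hom_ext _ _ fun q => ?_
        induction q using TensSet.ind with | h s x => ?_
        show (F.map (orbitMap S s)).hom ((bisetOfFunctor F).ρ (1, m) x)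
          = (F.obj S).ρ m ((F.map (orbitMap S s)).hom x)
        rw [bisetOfFunctor_ρ_right, ActCat.hom_comm_apply] }
  naturality S S' f := by
    ext q
    induction q using TensSet.ind with | h s x => ?_
    show (F.map (orbitMap S' (f.hom s))).hom x = (F.map f).hom ((F.map (orbitMap S s)).hom x)
    rw [ActCat.map_hom_map_hom_apply, orbitMap_comp]

lemma tensComparison_app_mk (S : FinRight G) (s : S.V) (x : (bisetOfFunctor F).V) :
    ((tensComparison F).app S).hom (mk s x) = (F.map (orbitMap S s)).hom x := rfl

lemma tensComparison_app_surjective (hF : PreservesPCE F) (S : FinRight G) :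
    Function.Surjective ((tensComparison F).app S).hom := fun v => by
  obtain ⟨s, ξ, rfl⟩ := exists_map_orbitMap_apply_eq hF S v
  exact ⟨mk s ξ, rfl⟩

/-- If `F(s · -)(x) = F(t · -)(y)`, the preserved pullback of the two orbit maps yields a common
`ξ` and `a, b` with `s a = t b`, `x = F(a · -)(ξ)` and `y = F(b · -)(ξ)`. -/
lemma tensComparison_app_injective (hF : PreservesPCE F) (S : FinRight G) :
    Function.Injective ((tensComparison F).app S).hom := by
  have := hF.1.some
  intro q q'
  induction q using TensSet.ind with | h s x => ?_
  induction q' using TensSet.ind with | h t y => ?_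
  intro hxy
  rw [tensComparison_app_mk, tensComparison_app_mk] at hxy
  have hpb := (ActCat.isPullback_iff _ _ _ _).mp
    (F.map_isPullback (IsPullback.of_hasPullback (orbitMap S s) (orbitMap S t)))
  obtain ⟨u, rfl, rfl⟩ := hpb.2.2 x y hxy
  obtain ⟨w, ξ, rfl⟩ := exists_map_orbitMap_apply_eq hF _ u
  have hw := ActCat.congr_hom_apply (pullback.condition (f := orbitMap S s) (g := orbitMap S t)) w
  rw [ActCat.map_hom_map_hom_apply, ActCat.map_hom_map_hom_apply, orbitMap_comp, orbitMap_comp,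
    orbitMap_rightRegular, orbitMap_rightRegular, ← bisetOfFunctor_ρ_left,
    ← bisetOfFunctor_ρ_left, ← mk_ρ, ← mk_ρ]
  exact congrArg (mk (X := bisetOfFunctor F) · ξ) hw

lemma isIso_tensComparison (hF : PreservesPCE F) : IsIso (tensComparison F) := by
  have (S : FinRight G) : IsIso ((tensComparison F).app S) := ActCat.isIso_of_bijective _
    ⟨tensComparison_app_injective hF S, tensComparison_app_surjective hF S⟩
  exact NatIso.isIso_of_isIso_app _

theorem exists_iso_tensFunctor (hF : PreservesPCE F) :
    ∃ X : BiFin G H, Nonempty (F ≅ tensFunctor G H X.obj) :=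
  have := isIso_tensComparison hF
  ⟨⟨bisetOfFunctor F, leftFree_bisetOfFunctor hF⟩, ⟨(asIso (tensComparison F)).symm⟩⟩

end Comparison

section FullyFaithful

variable [Fintype G]

lemma rightRegular_ρ_apply (g a : G) : (rightRegular G).ρ (op g) a = a * g := rfl

def regularTensEval (X : BiAct G H) : ((tensFunctor G H X).obj (rightRegular G)).V → X.V :=
  Quot.lift (fun p => X.ρ (p.1, 1) p.2) <| by
    rintro ⟨a, x⟩ ⟨b, y⟩ ⟨g, ha : a = b * g, hy : y = X.ρ (g, 1) x⟩
    show X.ρ (a, 1) x = X.ρ (b, 1) y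
    rw [ha, hy, BiAct.ρ_left_mul_apply]

variable {X X' : BiAct G H}

lemma regularTensEval_mk (a : G) (x : X.V) : regularTensEval X (mk a x) = X.ρ (a, 1) x := rfl

lemma regularTensEval_mk_one (x : X.V) : regularTensEval X (mk (1 : G) x) = x := by
  rw [regularTensEval_mk, ← Prod.one_eq_mk, ActCat.ρ_one_apply]

lemma mk_one_regularTensEval (q : ((tensFunctor G H X).obj (rightRegular G)).V) :
    mk (1 : G) (regularTensEval X q) = q := by
  induction q using TensSet.ind with | h a x => ?_
  rw [regularTensEval_mk, ← mk_ρ, rightRegular_ρ_apply, one_mul]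

lemma mk_one_ρ (g : G) (h : Hᵐᵒᵖ) (x : X.V) :
    mk (1 : G) (X.ρ (g, h) x) =
      ((tensFunctor G H X).map (leftMul g)).hom
        (((tensFunctor G H X).obj (rightRegular G)).ρ h (mk (1 : G) x)) := by
  rw [tensFunctor_obj_ρ_mk, tensFunctor_map_mk, ← BiAct.ρ_left_right_apply, ← mk_ρ,
    rightRegular_ρ_apply, leftMul_apply, one_mul, mul_one]

lemma regularTensEval_map_leftMul_ρ (g : G) (h : Hᵐᵒᵖ)
    (q : ((tensFunctor G H X).obj (rightRegular G)).V) :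
    regularTensEval X (((tensFunctor G H X).map (leftMul g)).hom
      (((tensFunctor G H X).obj _).ρ h q)) =
      X.ρ (g, h) (regularTensEval X q) := by
  induction q using TensSet.ind with | h a y => ?_
  show X.ρ (g * a, 1) (X.ρ (1, h) y) = X.ρ (g, h) (X.ρ (a, 1) y)
  rw [← actMul, ← actMul, Prod.mk_mul_mk, Prod.mk_mul_mk, mul_one, mul_one, one_mul]

noncomputable def bisetHomOfNatTrans (τ : tensFunctor G H X ⟶ tensFunctor G H X') : X ⟶ X' where
  hom := FintypeCat.homMk fun x => regularTensEval X' ((τ.app (rightRegular G)).hom (mk (1 : G) x))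
  comm := by
    rintro ⟨g, h⟩
    refine FintypeCat.hom_ext _ _ fun x => ?_
    show regularTensEval X' ((τ.app _).hom (mk (1 : G) (X.ρ (g, h) x)))
      = X'.ρ (g, h) (regularTensEval X' ((τ.app _).hom (mk (1 : G) x)))
    rw [mk_one_ρ, ← ActCat.comp_hom_apply, NatTrans.naturality, ActCat.comp_hom_apply,
      ActCat.hom_comm_apply, regularTensEval_map_leftMul_ρ]

lemma natTrans_app_mk (τ : tensFunctor G H X ⟶ tensFunctor G H X') (S : FinRight G)
    (s : S.V) (x : X.V) : (τ.app S).hom (mk s x) = mk s ((bisetHomOfNatTrans τ).hom x) := by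
  have hs : mk s x = ((tensFunctor G H X).map (orbitMap S s)).hom (mk (1 : G) x) := by
    rw [tensFunctor_map_mk, orbitMap_apply_one]
  rw [hs, ← ActCat.comp_hom_apply, NatTrans.naturality, ActCat.comp_hom_apply,
    ← mk_one_regularTensEval ((τ.app _).hom _), tensFunctor_map_mk, orbitMap_apply_one]
  rfl

variable {h : ∀ X : BiFin G H, PreservesPCE (tensFunctor G H X.obj)}

instance : (tensEquivFunctor G H h).Faithful where
  map_injective {X X'} φ ψ hφψ := by
    ext x
    have : mk (S := rightRegular G) 1 (φ.hom.hom x) = mk (S := rightRegular G) 1 (ψ.hom.hom x) :=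
      congrArg (fun τ => ((τ.hom.app (rightRegular G)).hom (mk (1 : G) x))) hφψ
    simpa only [regularTensEval_mk_one] using congrArg (regularTensEval X'.obj) this

instance : (tensEquivFunctor G H h).Full where
  map_surjective {X X'} τ := by
    refine ⟨ObjectProperty.homMk (bisetHomOfNatTrans τ.hom), ?_⟩
    ext S q
    induction q using TensSet.ind with | h s x => ?_
    exact (natTrans_app_mk τ.hom S s x).symm

instance : (tensEquivFunctor G H h).EssSurj where
  mem_essImage F :=
    have ⟨X, ⟨e⟩⟩ := exists_iso_tensFunctor F.property
    ⟨X, ⟨ObjectProperty.isoMk _ e.symm⟩⟩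

end FullyFaithful

theorem tensor_equivalence_general (G H : Type) [Group G] [Group H] [Fintype G] :
    ∃ h : ∀ X : BiFin G H, PreservesPCE (tensFunctor G H X.obj),
      (∀ F : FinRight G ⥤ FinRight H,
          PreservesPCE F ↔ ∃ X : BiFin G H, Nonempty (F ≅ tensFunctor G H X.obj)) ∧
      (tensEquivFunctor G H h).IsEquivalence :=
  ⟨fun X => preservesPCE_tensFunctor X.property,
    fun _ => ⟨exists_iso_tensFunctor,
      fun ⟨X, ⟨e⟩⟩ => (preservesPCE_tensFunctor X.property).of_iso e.symm⟩,
    { }⟩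

/-- Lemma `PropGlo`. For finite groups `G` and `H`, a functor
`F : Fin_G → Fin_H` preserves pullbacks, epimorphisms and finite coproducts if and only
if it is naturally isomorphic to `- ×_G X` for some `(G,H)`-biset `X` with free left
`G`-action; moreover `X ↦ - ×_G X` induces an equivalence
`^G Fin_H ≃ Fun_pce(Fin_G, Fin_H)`. -/
theorem tensor_equivalence (G H : Type) [Group G] [Group H] [Fintype G] [Fintype H] :
    ∃ h : ∀ X : BiFin G H, PreservesPCE (tensFunctor G H X.obj),
      (∀ F : FinRight G ⥤ FinRight H,
          PreservesPCE F ↔ ∃ X : BiFin G H, Nonempty (F ≅ tensFunctor G H X.obj)) ∧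
      (tensEquivFunctor G H h).IsEquivalence :=
  tensor_equivalence_general G H

end Paper
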